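/- Reflection of reduction through unwrapping: let t be a closed well-formed term of λ_int. If ⌊t⌋ →_a u in λ_sou for a ∈ {βv, π}, then there exists s in λ_int such that t →_{i a} s and ⌊s⌋ = u. -/

import Mathlib

set_option linter.unusedVariables false

namespace CC

/-- Terms of the source calculus λ_sou (de Bruijn indices, multi-binders). -/
inductive STm : Type
| var : Nat → STm
| lam : Nat → STm → STm
| app : STm → STm → STm
| proj : Nat → STm → STm
| tup : List STm → STm

instance : Inhabited STm := ⟨.var 0⟩

namespace STm

/-- Size of a source term. -/
def size : STm → Nat
| var _ => 1
| lam n t => t.size + n + 1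
| app t u => t.size + u.size + 1
| proj _ t => t.size + 1
| tup ts => ts.length + (ts.attach.map (fun ⟨a, ha⟩ => a.size)).sum
decreasing_by all_goals first
  | (have := List.sizeOf_lt_of_mem ha; omega)
  | decreasing_tactic

/-- Renaming of free de Bruijn indices. -/
def rename (ρ : Nat → Nat) : STm → STm
| var i => var (ρ i)
| lam n t => lam n (t.rename (fun i => if i < n then i else ρ (i - n) + n))
| app t u => app (t.rename ρ) (u.rename ρ)
| proj i t => proj i (t.rename ρ)
| tup ts => tup (ts.attach.map (fun ⟨a, ha⟩ => a.rename ρ))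
decreasing_by all_goals first
  | (have := List.sizeOf_lt_of_mem ha; omega)
  | decreasing_tactic

/-- Parallel substitution. -/
def subst (σ : Nat → STm) : STm → STm
| var i => σ i
| lam n t => lam n (t.subst (fun i => if i < n then var i else (σ (i - n)).rename (· + n)))
| app t u => app (t.subst σ) (u.subst σ)
| proj i t => proj i (t.subst σ)
| tup ts => tup (ts.attach.map (fun ⟨a, ha⟩ => a.subst σ))
decreasing_by all_goals first
  | (have := List.sizeOf_lt_of_mem ha; omega)
  | decreasing_tactic

/-- Simultaneous substitution of a list of terms for indices `0..vs.length-1`. -/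
def substList (vs : List STm) (t : STm) : STm :=
  t.subst (fun i => if i < vs.length then vs.getD i default else var (i - vs.length))

end STm

/-- Values of λ_sou: (multi-variable) abstractions and tuples of values. -/
inductive SVal : STm → Prop
| lam {n t} : SVal (.lam n t)
| tup {vs} : (∀ v ∈ vs, SVal v) → SVal (.tup vs)

/-- All free de Bruijn indices of `t` are `< k`. `FB 0 t` means `t` is closed. -/
inductive SFB : Nat → STm → Prop
| var {k i} : i < k → SFB k (.var i)
| lam {k n t} : SFB (k + n) t → SFB k (.lam n t)
| app {k t u} : SFB k t → SFB k u → SFB k (.app t u)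
| proj {k i t} : SFB k t → SFB k (.proj i t)
| tup {k ts} : (∀ t ∈ ts, SFB k t) → SFB k (.tup ts)

/-- Labels for the two rewrite rules. -/
inductive Lab | beta | pi
deriving DecidableEq

/-- Labelled weak right-to-left call-by-value reduction of λ_sou,
root rules closed under evaluation contexts. -/
inductive SStepL : Lab → STm → STm → Prop
| beta {n t vs} : (∀ v ∈ vs, SVal v) → vs.length = n →
    SStepL .beta (.app (.lam n t) (.tup vs)) (STm.substList vs t)
| proj {i vs} : (∀ v ∈ vs, SVal v) → i < vs.length →
    SStepL .pi (.proj i (.tup vs)) (vs.getD i default)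
| appR {l t u u'} : SStepL l u u' → SStepL l (.app t u) (.app t u')
| appL {l v t t'} : SVal v → SStepL l t t' → SStepL l (.app t v) (.app t' v)
| projC {l i t t'} : SStepL l t t' → SStepL l (.proj i t) (.proj i t')
| tupC {l ts t t' vs} : (∀ v ∈ vs, SVal v) → SStepL l t t' →
    SStepL l (.tup (ts ++ t :: vs)) (.tup (ts ++ t' :: vs))

/-- The reduction →_sou. -/
def SStep (t u : STm) : Prop := ∃ l, SStepL l t u

/-- Clashes of λ_sou: root clashes closed under evaluation contexts. -/
inductive SClash : STm → Prop
| rproj {i v} : SVal v → (∀ vs, v = .tup vs → vs.length ≤ i) → SClash (.proj i v)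
| rapp {n t v} : SVal v → (∀ vs, v = .tup vs → vs.length ≠ n) → SClash (.app (.lam n t) v)
| rtup {rs s} : SClash (.app (.tup rs) s)
| cAppR {t u} : SClash u → SClash (.app t u)
| cAppL {t v} : SVal v → SClash t → SClash (.app t v)
| cProj {i t} : SClash t → SClash (.proj i t)
| cTup {ts t vs} : (∀ v ∈ vs, SVal v) → SClash t → SClash (.tup (ts ++ t :: vs))

/-- Clash-freeness (coinductively: no reduct is a clash). -/
def SClashFree (t : STm) : Prop := ∀ u, Relation.ReflTransGen SStep t u → ¬ SClash u

/-- `k`-fold iteration of a reduction. -/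
def iterRel {α : Type _} (R : α → α → Prop) : Nat → α → α → Prop
| 0, t, u => t = u
| (k+1), t, u => ∃ s, R t s ∧ iterRel R k s u

end CC

namespace CC

/-- Terms of the intermediate calculus λ_int: abstractions are replaced by
closures `clo n m body bag` binding `n` wrapped variables ȳ (indices `m..m+n-1`
of the body) and `m` source variables x̄ (indices `0..m-1` of the body),
with a bag of `n` terms. -/
inductive ITm : Type
| var : Nat → ITm
| app : ITm → ITm → ITm
| proj : Nat → ITm → ITm
| tup : List ITm → ITm
| clo : Nat → Nat → ITm → List ITm → ITm

instance : Inhabited ITm := ⟨.var 0⟩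

namespace ITm

/-- Renaming of free variables of a λ_int term: closure bodies are untouched
(there are no free variables in the body other than the closure's own binders). -/
def irename (ρ : Nat → Nat) : ITm → ITm
| var i => var (ρ i)
| app t u => app (t.irename ρ) (u.irename ρ)
| proj i t => proj i (t.irename ρ)
| tup ts => tup (ts.attach.map (fun ⟨a, ha⟩ => a.irename ρ))
| clo n m body bag => clo n m body (bag.attach.map (fun ⟨a, ha⟩ => a.irename ρ))
decreasing_by all_goals first
  | (have := List.sizeOf_lt_of_mem ha; omega)
  | decreasing_tactic

/-- Simultaneous substitution of the terms `vs` for the free variables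
`0..vs.length-1` of a λ_int term (shifting the remaining ones down);
it goes into bags but leaves closure bodies untouched. -/
def isubst (vs : List ITm) : ITm → ITm
| var i => if i < vs.length then vs.getD i default else var (i - vs.length)
| app t u => app (t.isubst vs) (u.isubst vs)
| proj i t => proj i (t.isubst vs)
| tup ts => tup (ts.attach.map (fun ⟨a, ha⟩ => a.isubst vs))
| clo n m body bag => clo n m body (bag.attach.map (fun ⟨a, ha⟩ => a.isubst vs))
decreasing_by all_goals first
  | (have := List.sizeOf_lt_of_mem ha; omega)
  | decreasing_tactic

/-- Size of a λ_int term (counting bags and binder sequences). -/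
def isize : ITm → Nat
| var _ => 1
| app t u => t.isize + u.isize + 1
| proj _ t => t.isize + 1
| tup ts => ts.length + (ts.attach.map (fun ⟨a, ha⟩ => a.isize)).sum
| clo n m body bag =>
    body.isize + n + m + 1 + bag.length + (bag.attach.map (fun ⟨a, ha⟩ => a.isize)).sum
decreasing_by all_goals first
  | (have := List.sizeOf_lt_of_mem ha; omega)
  | decreasing_tactic

end ITm

/-- Values of λ_int: closures (with a variable bag or with an evaluated bag)
and tuples of values. -/
inductive IVal : ITm → Prop
| cloV {n m t bag} : (∀ b ∈ bag, ∃ i, b = ITm.var i) → IVal (.clo n m t bag)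
| cloE {n m t bag} : (∀ b ∈ bag, IVal b) → IVal (.clo n m t bag)
| tup {vs} : (∀ v ∈ vs, IVal v) → IVal (.tup vs)

/-- All free variables of a λ_int term are `< k` (`IFB 0 t`: `t` is closed). -/
inductive IFB : Nat → ITm → Prop
| var {k i} : i < k → IFB k (.var i)
| app {k t u} : IFB k t → IFB k u → IFB k (.app t u)
| proj {k i t} : IFB k t → IFB k (.proj i t)
| tup {k ts} : (∀ t ∈ ts, IFB k t) → IFB k (.tup ts)
| clo {k n m body bag} : (∀ b ∈ bag, IFB k b) → IFB (n + m + k) body →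
    IFB k (.clo n m body bag)

/-- Well-formed λ_int terms: every closure `clo n m body bag` satisfies
`|bag| = n`, its body is closed by the binders (fv(body) ⊆ ȳ ∪ x̄), and the bag
is either a bag of variables or a bag of values. -/
inductive IWF : ITm → Prop
| var {i} : IWF (.var i)
| app {t u} : IWF t → IWF u → IWF (.app t u)
| proj {i t} : IWF t → IWF (.proj i t)
| tup {ts} : (∀ t ∈ ts, IWF t) → IWF (.tup ts)
| cloV {n m body bag} : bag.length = n → IFB (n + m) body →
    (∀ b ∈ bag, ∃ i, b = ITm.var i) → IWF body → IWF (.clo n m body bag)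
| cloE {n m body bag} : bag.length = n → IFB (n + m) body →
    (∀ b ∈ bag, IVal b) → (∀ b ∈ bag, IWF b) → IWF body → IWF (.clo n m body bag)

/-- Prime λ_int terms: all closures are variable closures. -/
inductive IPrime : ITm → Prop
| var {i} : IPrime (.var i)
| app {t u} : IPrime t → IPrime u → IPrime (.app t u)
| proj {i t} : IPrime t → IPrime (.proj i t)
| tup {ts} : (∀ t ∈ ts, IPrime t) → IPrime (.tup ts)
| clo {n m body bag} : (∀ b ∈ bag, ∃ i, b = ITm.var i) → IPrime body →
    IPrime (.clo n m body bag)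

/-- Labelled reduction of λ_int: the root rules `iβv` (the closure's bag is
substituted for ȳ and the argument tuple for x̄, simultaneously) and `iπ`,
closed under evaluation contexts (which do not enter closures). -/
inductive IStepL : Lab → ITm → ITm → Prop
| beta {n m body bag vs} : (∀ b ∈ bag, IVal b) → (∀ v ∈ vs, IVal v) →
    bag.length = n → vs.length = m →
    IStepL .beta (.app (.clo n m body bag) (.tup vs)) (ITm.isubst (vs ++ bag) body)
| proj {i vs} : (∀ v ∈ vs, IVal v) → i < vs.length →
    IStepL .pi (.proj i (.tup vs)) (vs.getD i default)
| appR {l t u u'} : IStepL l u u' → IStepL l (.app t u) (.app t u')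
| appL {l v t t'} : IVal v → IStepL l t t' → IStepL l (.app t v) (.app t' v)
| projC {l i t t'} : IStepL l t t' → IStepL l (.proj i t) (.proj i t')
| tupC {l ts t t' vs} : (∀ v ∈ vs, IVal v) → IStepL l t t' →
    IStepL l (.tup (ts ++ t :: vs)) (.tup (ts ++ t' :: vs))

/-- The reduction →_int. -/
def IStep (t u : ITm) : Prop := ∃ l, IStepL l t u

/-- Clashes of λ_int: root clashes closed under evaluation contexts. -/
inductive IClash : ITm → Prop
| rproj {i v} : IVal v → (∀ vs, v = .tup vs → vs.length ≤ i) → IClash (.proj i v)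
| rapp {n m body bag v} : IVal v → (∀ vs, v = .tup vs → vs.length ≠ m) →
    IClash (.app (.clo n m body bag) v)
| rtup {rs s} : IClash (.app (.tup rs) s)
| cAppR {t u} : IClash u → IClash (.app t u)
| cAppL {t v} : IVal v → IClash t → IClash (.app t v)
| cProj {i t} : IClash t → IClash (.proj i t)
| cTup {ts t vs} : (∀ v ∈ vs, IVal v) → IClash t → IClash (.tup (ts ++ t :: vs))

/-- Clash-freeness for λ_int. -/
def IClashFree (t : ITm) : Prop := ∀ u, Relation.ReflTransGen IStep t u → ¬ IClash u

/-- The wrapping translation ⌈·⌉ : λ_sou → λ_int: every abstraction `λx̄.t` with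
free variables ȳ becomes the variable closure `[λȳ.λx̄.⌈t⌉, ⟨ȳ⟩]`; homomorphic
on the other constructors. -/
def STm.fvs : STm → Finset Nat
| .var i => {i}
| .lam n t => (t.fvs.filter (· ≥ n)).image (· - n)
| .app t u => t.fvs ∪ u.fvs
| .proj _ t => t.fvs
| .tup ts => ts.attach.foldr (fun ⟨a, ha⟩ acc => a.fvs ∪ acc) ∅
decreasing_by all_goals first
  | (have := List.sizeOf_lt_of_mem ha; omega)
  | decreasing_tactic

def STm.wrap : STm → ITm
| .var i => .var i
| .app t u => .app t.wrap u.wrap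
| .proj i t => .proj i t.wrap
| .tup ts => .tup (ts.attach.map (fun ⟨a, ha⟩ => a.wrap))
| .lam n t =>
    let ys : List Nat := (((t.fvs.filter (· ≥ n)).image (· - n)).sort (· ≤ ·))
    .clo ys.length n
      (t.wrap.irename (fun j => if j < n then j else n + (ys.idxOf (j - n))))
      (ys.map (fun j => ITm.var j))
decreasing_by all_goals first
  | (have := List.sizeOf_lt_of_mem ha; omega)
  | decreasing_tactic

/-- The unwrapping translation ⌊·⌋ : λ_int → λ_sou: substitutes the (unwrapped)
bag of each closure for its wrapped variables ȳ; on a variable closure with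
bag ⟨ȳ⟩ this gives `λx̄.⌊body⌋` with the ȳ free. -/
def ITm.unwrap : ITm → STm
| .var i => .var i
| .app t u => .app t.unwrap u.unwrap
| .proj i t => .proj i t.unwrap
| .tup ts => .tup (ts.attach.map (fun ⟨a, ha⟩ => a.unwrap))
| .clo n m body bag =>
    let ub : List STm := bag.attach.map (fun ⟨a, ha⟩ => a.unwrap)
    .lam m (body.unwrap.subst (fun i =>
      if i < m then .var i
      else if i < m + n then (ub.getD (i - m) default).rename (· + m)
      else .var (i - n)))
decreasing_by all_goals first
  | (have := List.sizeOf_lt_of_mem ha; omega)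
  | decreasing_tactic

end CC

namespace CC
namespace STm

theorem tup_ext {ts us : List STm} (h : ts = us) : STm.tup ts = STm.tup us := by rw [h]

@[simp] theorem rename_var (ρ i) : (STm.var i).rename ρ = .var (ρ i) := by rw [STm.rename]
@[simp] theorem rename_app (ρ t u) : (STm.app t u).rename ρ = .app (t.rename ρ) (u.rename ρ) := by rw [STm.rename]
@[simp] theorem rename_proj (ρ i t) : (STm.proj i t).rename ρ = .proj i (t.rename ρ) := by rw [STm.rename]
@[simp] theorem rename_tup (ρ ts) : (STm.tup ts).rename ρ = .tup (ts.map (·.rename ρ)) := by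
  rw [STm.rename]; exact tup_ext (List.attach_map_val)
theorem rename_lam (ρ n t) : (STm.lam n t).rename ρ
    = .lam n (t.rename (fun i => if h : i < n then i else ρ (i - n) + n)) := by rw [STm.rename]; rfl

@[simp] theorem subst_var (σ i) : (STm.var i).subst σ = σ i := by rw [STm.subst]
@[simp] theorem subst_app (σ t u) : (STm.app t u).subst σ = .app (t.subst σ) (u.subst σ) := by rw [STm.subst]
@[simp] theorem subst_proj (σ i t) : (STm.proj i t).subst σ = .proj i (t.subst σ) := by rw [STm.subst]
@[simp] theorem subst_tup (σ ts) : (STm.tup ts).subst σ = .tup (ts.map (·.subst σ)) := by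
  rw [STm.subst]; exact tup_ext (List.attach_map_val)
theorem subst_lam (σ n t) : (STm.lam n t).subst σ
    = .lam n (t.subst (fun i => if h : i < n then var i else (σ (i - n)).rename (· + n))) := by rw [STm.subst]; rfl

theorem rename_ext : ∀ (ρ : Nat → Nat) (t : STm) (ρ' : Nat → Nat),
    (∀ i, ρ i = ρ' i) → t.rename ρ = t.rename ρ' := by
  intro ρ t
  induction ρ, t using STm.rename.induct with
  | case1 ρ i => intro ρ' h; simp [h]
  | case2 ρ n t ih =>
    intro ρ' h; rw [rename_lam, rename_lam]
    congr 1
    exact ih _ (fun i => by by_cases hi : i < n <;> simp [hi, h])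
  | case3 ρ t u ih1 ih2 => intro ρ' h; simp [ih1 _ h, ih2 _ h]
  | case4 ρ i t ih => intro ρ' h; simp [ih _ h]
  | case5 ρ ts ih =>
    intro ρ' h; simp only [rename_tup]
    exact tup_ext (List.map_congr_left (fun a ha => ih a ha _ h))

theorem rename_rename : ∀ (ρ : Nat → Nat) (t : STm) (ρ' : Nat → Nat),
    (t.rename ρ).rename ρ' = t.rename (fun i => ρ' (ρ i)) := by
  intro ρ t
  induction ρ, t using STm.rename.induct with
  | case1 ρ i => intro ρ'; simp
  | case2 ρ n t ih =>
    intro ρ'; rw [rename_lam, rename_lam, rename_lam, ih]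
    congr 1
    apply rename_ext
    intro i
    by_cases hi : i < n <;> simp [hi, Nat.add_sub_cancel]
  | case3 ρ t u ih1 ih2 => intro ρ'; simp [ih1, ih2]
  | case4 ρ i t ih => intro ρ'; simp [ih]
  | case5 ρ ts ih =>
    intro ρ'; simp only [rename_tup, List.map_map]
    exact tup_ext (List.map_congr_left (fun a ha => ih a ha _))

theorem subst_ext : ∀ (σ : Nat → STm) (t : STm) (σ' : Nat → STm),
    (∀ i, σ i = σ' i) → t.subst σ = t.subst σ' := by
  intro σ t
  induction σ, t using STm.subst.induct with
  | case1 σ i => intro σ' h; simp [h]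
  | case2 σ n t ih =>
    intro σ' h; rw [subst_lam, subst_lam]
    congr 1
    exact ih _ (fun i => by by_cases hi : i < n <;> simp [hi, h])
  | case3 σ t u ih1 ih2 => intro σ' h; simp [ih1 _ h, ih2 _ h]
  | case4 σ i t ih => intro σ' h; simp [ih _ h]
  | case5 σ ts ih =>
    intro σ' h; simp only [subst_tup]
    exact tup_ext (List.map_congr_left (fun a ha => ih a ha _ h))

theorem subst_rename : ∀ (σ : Nat → STm) (t : STm) (ρ : Nat → Nat),
    (t.subst σ).rename ρ = t.subst (fun i => (σ i).rename ρ) := by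
  intro σ t
  induction σ, t using STm.subst.induct with
  | case1 σ i => intro ρ; simp
  | case2 σ n t ih =>
    intro ρ; rw [subst_lam, rename_lam, subst_lam, ih]
    congr 1
    apply subst_ext
    intro i
    by_cases hi : i < n
    · simp [hi]
    · simp only [hi, dif_neg, not_false_iff]
      rw [rename_rename, rename_rename]
      apply rename_ext
      intro j
      simp [Nat.add_sub_cancel]
  | case3 σ t u ih1 ih2 => intro ρ; simp [ih1, ih2]
  | case4 σ i t ih => intro ρ; simp [ih]
  | case5 σ ts ih =>
    intro ρ; simp only [subst_tup, rename_tup, List.map_map]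
    exact tup_ext (List.map_congr_left (fun a ha => ih a ha _))

theorem rename_subst : ∀ (ρ : Nat → Nat) (t : STm) (τ : Nat → STm),
    (t.rename ρ).subst τ = t.subst (fun i => τ (ρ i)) := by
  intro ρ t
  induction ρ, t using STm.rename.induct with
  | case1 ρ i => intro τ; simp
  | case2 ρ n t ih =>
    intro τ; rw [rename_lam, subst_lam, subst_lam, ih]
    congr 1
    apply subst_ext
    intro i
    by_cases hi : i < n <;> simp [hi, Nat.add_sub_cancel]
  | case3 ρ t u ih1 ih2 => intro τ; simp [ih1, ih2]
  | case4 ρ i t ih => intro τ; simp [ih]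
  | case5 ρ ts ih =>
    intro τ; simp only [rename_tup, subst_tup, List.map_map]
    exact tup_ext (List.map_congr_left (fun a ha => ih a ha _))

theorem subst_subst : ∀ (σ : Nat → STm) (t : STm) (τ : Nat → STm),
    (t.subst σ).subst τ = t.subst (fun i => (σ i).subst τ) := by
  intro σ t
  induction σ, t using STm.subst.induct with
  | case1 σ i => intro τ; simp
  | case2 σ n t ih =>
    intro τ; rw [subst_lam, subst_lam, subst_lam, ih]
    congr 1
    apply subst_ext
    intro i
    by_cases hi : i < n
    · simp [hi]
    · simp only [hi, dif_neg, not_false_iff]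
      rw [rename_subst, subst_rename]
      apply subst_ext
      intro j
      simp [Nat.add_sub_cancel]
  | case3 σ t u ih1 ih2 => intro τ; simp [ih1, ih2]
  | case4 σ i t ih => intro τ; simp [ih]
  | case5 σ ts ih =>
    intro τ; simp only [subst_tup, List.map_map]
    exact tup_ext (List.map_congr_left (fun a ha => ih a ha _))

theorem subst_id : ∀ (t : STm), t.subst (fun i => .var i) = t := by
  have key : ∀ (σ : Nat → STm) (t : STm), (∀ i, σ i = .var i) → t.subst σ = t := by
    intro σ t
    induction σ, t using STm.subst.induct with
    | case1 σ i => intro h; simp [h]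
    | case2 σ n t ih =>
      intro h; rw [subst_lam]
      congr 1
      refine ih (fun i => ?_)
      by_cases hi : i < n
      · simp [hi]
      · simp only [hi, dif_neg, not_false_iff, h, rename_var]
        congr 1
        omega
    | case3 σ t u ih1 ih2 => intro h; simp [ih1 h, ih2 h]
    | case4 σ i t ih => intro h; simp [ih h]
    | case5 σ ts ih =>
      intro h; simp only [subst_tup]
      conv_rhs => rw [← List.map_id ts]
      exact tup_ext (List.map_congr_left (fun a ha => ih a ha h))
  exact fun t => key _ t (fun _ => rfl)

end STm
end CC

namespace CC

theorem getD_map' {α β : Type _} (l : List α) (f : α → β) (i : Nat) (h : i < l.length)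
    (d : β) (d' : α) : (l.map f).getD i d = f (l.getD i d') := by
  rw [List.getD_eq_getElem _ _ (by simpa using h), List.getD_eq_getElem _ _ h,
    List.getElem_map]

theorem getD_mem' {α : Type _} (l : List α) (i : Nat) (h : i < l.length) (d : α) :
    l.getD i d ∈ l := by
  rw [List.getD_eq_getElem _ _ h]
  exact List.getElem_mem h

namespace STm

theorem SFB_rename {a : Nat} {t : STm} (h : SFB a t) :
    ∀ {b : Nat} {ρ : Nat → Nat}, (∀ i, i < a → ρ i < b) → SFB b (t.rename ρ) := by
  induction h with
  | var hik => intro b ρ hb; simpa using SFB.var (hb _ hik)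
  | @lam k n t hfb ih =>
    intro b ρ hb
    rw [rename_lam]
    refine SFB.lam (ih ?_)
    intro i hi
    by_cases hin : i < n
    · simp only [hin, dif_pos]; omega
    · simp only [hin, dif_neg, not_false_iff]
      have := hb (i - n) (by omega)
      omega
  | app h1 h2 ih1 ih2 => intro b ρ hb; simpa using SFB.app (ih1 hb) (ih2 hb)
  | proj h1 ih => intro b ρ hb; simpa using SFB.proj (ih hb)
  | tup h1 ih =>
    intro b ρ hb
    rw [rename_tup]
    refine SFB.tup ?_
    intro t' ht'
    obtain ⟨a', ha', rfl⟩ := List.mem_map.1 ht'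
    exact ih a' ha' hb

theorem SFB_subst {a : Nat} {t : STm} (h : SFB a t) :
    ∀ {b : Nat} {σ : Nat → STm}, (∀ i, i < a → SFB b (σ i)) → SFB b (t.subst σ) := by
  induction h with
  | var hik => intro b σ hb; simpa using hb _ hik
  | @lam k n t hfb ih =>
    intro b σ hb
    rw [subst_lam]
    refine SFB.lam (ih ?_)
    intro i hi
    by_cases hin : i < n
    · simp only [hin, dif_pos]
      exact SFB.var (by omega)
    · simp only [hin, dif_neg, not_false_iff]
      exact SFB_rename (hb (i - n) (by omega)) (fun j hj => by omega)
  | app h1 h2 ih1 ih2 => intro b σ hb; simpa using SFB.app (ih1 hb) (ih2 hb)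
  | proj h1 ih => intro b σ hb; simpa using SFB.proj (ih hb)
  | tup h1 ih =>
    intro b σ hb
    rw [subst_tup]
    refine SFB.tup ?_
    intro t' ht'
    obtain ⟨a', ha', rfl⟩ := List.mem_map.1 ht'
    exact ih a' ha' hb

theorem subst_congr_fb {k : Nat} {t : STm} (h : SFB k t) :
    ∀ {σ σ' : Nat → STm}, (∀ i, i < k → σ i = σ' i) → t.subst σ = t.subst σ' := by
  induction h with
  | var hik => intro σ σ' hb; simp [hb _ hik]
  | @lam k n t hfb ih =>
    intro σ σ' hb
    rw [subst_lam, subst_lam]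
    congr 1
    refine ih (fun i hi => ?_)
    by_cases hin : i < n
    · simp [hin]
    · simp only [hin, dif_neg, not_false_iff]
      rw [hb (i - n) (by omega)]
  | app h1 h2 ih1 ih2 => intro σ σ' hb; simp [ih1 hb, ih2 hb]
  | proj h1 ih => intro σ σ' hb; simp [ih hb]
  | tup h1 ih =>
    intro σ σ' hb
    simp only [subst_tup]
    exact tup_ext (List.map_congr_left (fun a ha => ih a ha hb))

end STm

namespace ITm

theorem itup_ext {ts us : List ITm} (h : ts = us) : ITm.tup ts = ITm.tup us := by rw [h]
theorem ibag_ext {n m b} {ts us : List ITm} (h : ts = us) :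
    ITm.clo n m b ts = ITm.clo n m b us := by rw [h]

@[simp] theorem isubst_var (ws i) : (ITm.var i).isubst ws
    = if i < ws.length then ws.getD i default else .var (i - ws.length) := by rw [ITm.isubst]
@[simp] theorem isubst_app (ws t u) : (ITm.app t u).isubst ws
    = .app (t.isubst ws) (u.isubst ws) := by rw [ITm.isubst]
@[simp] theorem isubst_proj (ws i t) : (ITm.proj i t).isubst ws
    = .proj i (t.isubst ws) := by rw [ITm.isubst]
@[simp] theorem isubst_tup (ws ts) : (ITm.tup ts).isubst ws
    = .tup (ts.map (·.isubst ws)) := by rw [ITm.isubst]; exact itup_ext (List.attach_map_val)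
@[simp] theorem isubst_clo (ws n m body bag) : (ITm.clo n m body bag).isubst ws
    = .clo n m body (bag.map (·.isubst ws)) := by
  rw [ITm.isubst]; exact ibag_ext (List.attach_map_val)

@[simp] theorem unwrap_var (i) : (ITm.var i).unwrap = .var i := by rw [ITm.unwrap]
@[simp] theorem unwrap_app (t u) : (ITm.app t u).unwrap = .app t.unwrap u.unwrap := by rw [ITm.unwrap]
@[simp] theorem unwrap_proj (i t) : (ITm.proj i t).unwrap = .proj i t.unwrap := by rw [ITm.unwrap]
@[simp] theorem unwrap_tup (ts) : (ITm.tup ts).unwrap = .tup (ts.map (·.unwrap)) := by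
  rw [ITm.unwrap]; exact STm.tup_ext (List.attach_map_val)
theorem unwrap_clo (n m body bag) : (ITm.clo n m body bag).unwrap
    = .lam m (body.unwrap.subst (fun i =>
        if i < m then .var i
        else if i < m + n then ((bag.map ITm.unwrap).getD (i - m) default).rename (· + m)
        else .var (i - n))) := by
  rw [ITm.unwrap]
  congr 1
  apply STm.subst_ext
  intro i
  by_cases h1 : i < m
  · simp [h1]
  · by_cases h2 : i < m + n <;> simp [h1, h2, List.attach_map_val]

end ITm

end CC

namespace CC

/-- For well-formed terms, unwrap preserves the free-variable bound. -/
theorem IFB_unwrap {t : ITm} (hw : IWF t) : ∀ {k : Nat}, IFB k t → SFB k t.unwrap := by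
  induction hw with
  | var =>
    intro k h; cases h with
    | var hik => rw [ITm.unwrap_var]; exact SFB.var hik
  | app h1 h2 ih1 ih2 =>
    intro k h; cases h with
    | app ha hb => simpa using SFB.app (ih1 ha) (ih2 hb)
  | proj h1 ih =>
    intro k h; cases h with
    | proj ha => simpa using SFB.proj (ih ha)
  | tup h1 ih =>
    intro k h; cases h with
    | tup ha =>
      rw [ITm.unwrap_tup]
      refine SFB.tup ?_
      intro t' ht'
      obtain ⟨a', ha', rfl⟩ := List.mem_map.1 ht'
      exact ih a' ha' (ha a' ha')
  | @cloV n m body bag hlen hfb hvars hwb ihb =>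
    intro k h
    cases h with
    | clo hbag hbody =>
      rw [ITm.unwrap_clo]
      refine SFB.lam (STm.SFB_subst (a := n + m) (ihb hfb) ?_)
      intro i hi
      by_cases h1 : i < m
      · rw [if_pos h1]; exact SFB.var (by omega)
      · have h2 : i < m + n := by omega
        rw [if_neg h1, if_pos h2]
        have hlt : i - m < bag.length := by omega
        rw [getD_map' bag _ _ hlt _ default]
        obtain ⟨j, hj⟩ := hvars _ (getD_mem' bag (i - m) hlt default)
        have hfbj := hbag _ (getD_mem' bag (i - m) hlt default)
        rw [hj] at hfbj ⊢
        cases hfbj with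
        | var hjk =>
          rw [ITm.unwrap_var, STm.rename_var]
          exact SFB.var (by omega)
  | @cloE n m body bag hlen hfb hvals hwbag hwb ihbag ihb =>
    intro k h
    cases h with
    | clo hbag hbody =>
      rw [ITm.unwrap_clo]
      refine SFB.lam (STm.SFB_subst (a := n + m) (ihb hfb) ?_)
      intro i hi
      by_cases h1 : i < m
      · rw [if_pos h1]; exact SFB.var (by omega)
      · have h2 : i < m + n := by omega
        rw [if_neg h1, if_pos h2]
        have hlt : i - m < bag.length := by omega
        rw [getD_map' bag _ _ hlt _ default]
        have hmem := getD_mem' bag (i - m) hlt default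
        exact STm.SFB_rename (ihbag _ hmem (hbag _ hmem)) (fun j hj => by omega)

/-- For well-formed terms, unwrap reflects values. -/
theorem IVal_of_SVal {t : ITm} (hw : IWF t) (hv : SVal t.unwrap) : IVal t := by
  induction hw with
  | var => rw [ITm.unwrap_var] at hv; cases hv
  | app h1 h2 ih1 ih2 => rw [ITm.unwrap_app] at hv; cases hv
  | proj h1 ih => rw [ITm.unwrap_proj] at hv; cases hv
  | tup h1 ih =>
    rw [ITm.unwrap_tup] at hv
    cases hv with
    | tup hvs =>
      refine IVal.tup ?_
      intro v hvmem
      exact ih v hvmem (hvs _ (List.mem_map_of_mem hvmem))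
  | cloV hlen hfb hvars hwb ihb => exact IVal.cloV hvars
  | cloE hlen hfb hvals hwbag hwb ihbag ihb => exact IVal.cloE hvals

/-- The substitution on λ_sou corresponding to `isubst ws` through unwrap. -/
def liftS (ws : List ITm) : Nat → STm := fun i =>
  if i < ws.length then (ws.getD i default).unwrap else .var (i - ws.length)

theorem unwrap_isubst_clo (ws : List ITm) {n m : Nat} {body : ITm} {bag : List ITm}
    (hlen : bag.length = n) (hfb : IFB (n + m) body) (hwb : IWF body)
    (Hbag : ∀ b ∈ bag, (b.isubst ws).unwrap = b.unwrap.subst (liftS ws)) :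
    ((ITm.clo n m body bag).isubst ws).unwrap
      = (ITm.clo n m body bag).unwrap.subst (liftS ws) := by
  rw [ITm.isubst_clo, ITm.unwrap_clo, ITm.unwrap_clo, STm.subst_lam, STm.subst_subst]
  congr 1
  refine STm.subst_congr_fb (IFB_unwrap hwb hfb) ?_
  intro i hi
  by_cases h1 : i < m
  · simp [h1]
  · have h2 : i < m + n := by omega
    simp only [h1, if_neg, not_false_iff, h2, if_pos, STm.subst_var]
    have hlt : i - m < bag.length := by omega
    have hlt2 : i - m < (bag.map (·.isubst ws)).length := by simpa using hlt
    rw [getD_map' _ _ _ hlt2 _ default, getD_map' _ _ _ hlt _ default,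
       getD_map' _ _ _ hlt _ default, Hbag _ (getD_mem' bag (i - m) hlt default)]
    rw [STm.rename_subst, STm.subst_rename]
    apply STm.subst_ext
    intro j
    have hjm : ¬ j + m < m := by omega
    rw [dif_neg hjm]
    simp [Nat.add_sub_cancel]


/-- Key commutation: unwrap commutes with simultaneous substitution. -/
theorem unwrap_isubst {t : ITm} (hw : IWF t) (ws : List ITm) :
    (t.isubst ws).unwrap = t.unwrap.subst (liftS ws) := by
  induction hw with
  | @var i =>
    rw [ITm.isubst_var, ITm.unwrap_var, STm.subst_var, liftS]
    split <;> simp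
  | app h1 h2 ih1 ih2 => simp [ih1, ih2]
  | proj h1 ih => simp [ih]
  | tup h1 ih =>
    simp only [ITm.isubst_tup, ITm.unwrap_tup, STm.subst_tup, List.map_map]
    exact STm.tup_ext (List.map_congr_left (fun a ha => ih a ha))
  | @cloV n m body bag hlen hfb hvars hwb ihb =>
    have Hbag : ∀ b ∈ bag, (b.isubst ws).unwrap = b.unwrap.subst (liftS ws) := by
      intro b hb
      obtain ⟨j, rfl⟩ := hvars b hb
      rw [ITm.isubst_var, ITm.unwrap_var, STm.subst_var, liftS]
      split <;> simp
    exact unwrap_isubst_clo ws hlen hfb hwb Hbag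
  | @cloE n m body bag hlen hfb hvals hwbag hwb ihbag ihb =>
    exact unwrap_isubst_clo ws hlen hfb hwb (fun b hb => ihbag b hb)
end CC

namespace CC

/-- Reflection of reduction through unwrapping: for closed well-formed `t` in
λ_int, if `⌊t⌋ →_a u` in λ_sou (a ∈ {βv, π}) then there is `s` in λ_int with
`t →_{ia} s` and `⌊s⌋ = u`. -/
theorem unwrap_reflection (t : ITm) (u : STm) (a : Lab)
    (hc : IFB 0 t) (hwf : IWF t) (h : SStepL a t.unwrap u) :
    ∃ s : ITm, IStepL a t s ∧ s.unwrap = u := by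
  obtain ⟨x, hx⟩ : ∃ x, t.unwrap = x := ⟨_, rfl⟩
  rw [hx] at h
  induction h generalizing t with
  | @beta n tb vs hvs hlen =>
    cases t with
    | var i => rw [ITm.unwrap_var] at hx; simp at hx
    | proj i t1 => rw [ITm.unwrap_proj] at hx; simp at hx
    | tup ts => rw [ITm.unwrap_tup] at hx; simp at hx
    | clo n1 m1 body bag => rw [ITm.unwrap_clo] at hx; simp at hx
    | app t1 t2 =>
      rw [ITm.unwrap_app] at hx
      injection hx with hx1 hx2
      cases hc with | app hc1 hc2 =>
      cases hwf with | app hw1 hw2 =>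
      cases t1 with
      | var i => rw [ITm.unwrap_var] at hx1; simp at hx1
      | app a b => rw [ITm.unwrap_app] at hx1; simp at hx1
      | proj i a => rw [ITm.unwrap_proj] at hx1; simp at hx1
      | tup ts => rw [ITm.unwrap_tup] at hx1; simp at hx1
      | clo n1 m body bag =>
        rw [ITm.unwrap_clo] at hx1
        injection hx1 with hm hbody
        subst hm
        cases t2 with
        | var i => rw [ITm.unwrap_var] at hx2; simp at hx2
        | app a b => rw [ITm.unwrap_app] at hx2; simp at hx2
        | proj i a => rw [ITm.unwrap_proj] at hx2; simp at hx2
        | clo a b c d => rw [ITm.unwrap_clo] at hx2; simp at hx2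
        | tup ws =>
          rw [ITm.unwrap_tup] at hx2
          injection hx2 with hws
          -- lengths
          have hlws : ws.length = m := by
            have := congrArg List.length hws; simpa using this.trans hlen
          -- bag facts
          cases hc1 with | clo hcbag hcbody =>
          have hbagvals : ∀ b ∈ bag, IVal b := by
            cases hw1 with
            | cloV _ _ hvars _ =>
              intro b hb
              obtain ⟨j, rfl⟩ := hvars b hb
              have := hcbag _ hb
              cases this with | var hj => omega
            | cloE _ _ hvals _ _ => exact fun b hb => hvals b hb
          obtain ⟨hblen, hfb, hwb⟩ : bag.length = n1 ∧ IFB (n1 + m) body ∧ IWF body := by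
            cases hw1 with
            | cloV h1 h2 _ h4 => exact ⟨h1, h2, h4⟩
            | cloE h1 h2 _ _ h5 => exact ⟨h1, h2, h5⟩
          -- ws values
          cases hw2 with | tup hwws =>
          have hwsvals : ∀ w ∈ ws, IVal w := by
            intro w hw
            refine IVal_of_SVal (hwws w hw) (hvs _ ?_)
            rw [← hws]
            exact List.mem_map_of_mem hw
          refine ⟨ITm.isubst (ws ++ bag) body, IStepL.beta hbagvals hwsvals hblen hlws, ?_⟩
          rw [unwrap_isubst hwb, ← hbody, STm.substList, STm.subst_subst]
          refine STm.subst_congr_fb (IFB_unwrap hwb hfb) ?_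
          intro i hi
          by_cases h1 : i < m
          · rw [if_pos h1, STm.subst_var, liftS]
            have hilt : i < (ws ++ bag).length := by simp; omega
            rw [if_pos hilt, List.getD_append _ _ _ _ (by omega)]
            rw [if_pos (by omega : i < vs.length), ← hws,
              getD_map' ws _ _ (by omega) _ default]
          · have h2 : i < m + n1 := by omega
            rw [if_neg h1, if_pos h2, liftS]
            have hilt : i < (ws ++ bag).length := by simp; omega
            rw [if_pos hilt, List.getD_append_right _ _ _ _ (by omega), hlws]
            rw [STm.rename_subst]
            have hltb : i - m < bag.length := by omega
            rw [getD_map' bag _ _ hltb _ default]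
            conv_lhs => rw [← STm.subst_id ((bag.getD (i - m) default).unwrap)]
            apply STm.subst_ext
            intro j
            have hj : ¬ j + m < vs.length := by omega
            rw [if_neg hj]
            congr 1
            omega
  | @proj i vs hvs hilt =>
    cases t with
    | var j => rw [ITm.unwrap_var] at hx; simp at hx
    | app a b => rw [ITm.unwrap_app] at hx; simp at hx
    | tup ts => rw [ITm.unwrap_tup] at hx; simp at hx
    | clo a b c d => rw [ITm.unwrap_clo] at hx; simp at hx
    | proj j t1 =>
      rw [ITm.unwrap_proj] at hx
      injection hx with hj hx1
      subst hj
      cases t1 with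
      | var j => rw [ITm.unwrap_var] at hx1; simp at hx1
      | app a b => rw [ITm.unwrap_app] at hx1; simp at hx1
      | proj j a => rw [ITm.unwrap_proj] at hx1; simp at hx1
      | clo a b c d => rw [ITm.unwrap_clo] at hx1; simp at hx1
      | tup ws =>
        rw [ITm.unwrap_tup] at hx1
        injection hx1 with hws
        cases hwf with | proj hw1 =>
        cases hw1 with | tup hwws =>
        have hwsvals : ∀ w ∈ ws, IVal w := by
          intro w hw
          refine IVal_of_SVal (hwws w hw) (hvs _ ?_)
          rw [← hws]; exact List.mem_map_of_mem hw
        have hlw : j < ws.length := by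
          have := congrArg List.length hws; simp at this; omega
        refine ⟨ws.getD j default, IStepL.proj hwsvals hlw, ?_⟩
        rw [← hws, getD_map' ws _ _ hlw _ default]
  | @appR l t' u' u'' hst ih =>
    cases t with
    | var j => rw [ITm.unwrap_var] at hx; simp at hx
    | proj j a => rw [ITm.unwrap_proj] at hx; simp at hx
    | tup ts => rw [ITm.unwrap_tup] at hx; simp at hx
    | clo a b c d => rw [ITm.unwrap_clo] at hx; simp at hx
    | app t1 t2 =>
      rw [ITm.unwrap_app] at hx
      injection hx with hx1 hx2
      cases hc with | app hc1 hc2 =>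
      cases hwf with | app hw1 hw2 =>
      obtain ⟨s2, hstep, hsu⟩ := ih t2 hc2 hw2 hx2
      exact ⟨.app t1 s2, IStepL.appR hstep, by rw [ITm.unwrap_app, hx1, hsu]⟩
  | @appL l v t' t'' hv hst ih =>
    cases t with
    | var j => rw [ITm.unwrap_var] at hx; simp at hx
    | proj j a => rw [ITm.unwrap_proj] at hx; simp at hx
    | tup ts => rw [ITm.unwrap_tup] at hx; simp at hx
    | clo a b c d => rw [ITm.unwrap_clo] at hx; simp at hx
    | app t1 t2 =>
      rw [ITm.unwrap_app] at hx
      injection hx with hx1 hx2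
      cases hc with | app hc1 hc2 =>
      cases hwf with | app hw1 hw2 =>
      obtain ⟨s1, hstep, hsu⟩ := ih t1 hc1 hw1 hx1
      exact ⟨.app s1 t2, IStepL.appL (IVal_of_SVal hw2 (hx2 ▸ hv)) hstep,
        by rw [ITm.unwrap_app, hx2, hsu]⟩
  | @projC l i t' t'' hst ih =>
    cases t with
    | var j => rw [ITm.unwrap_var] at hx; simp at hx
    | app a b => rw [ITm.unwrap_app] at hx; simp at hx
    | tup ts => rw [ITm.unwrap_tup] at hx; simp at hx
    | clo a b c d => rw [ITm.unwrap_clo] at hx; simp at hx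
    | proj j t1 =>
      rw [ITm.unwrap_proj] at hx
      injection hx with hj hx1
      subst hj
      cases hc with | proj hc1 =>
      cases hwf with | proj hw1 =>
      obtain ⟨s1, hstep, hsu⟩ := ih t1 hc1 hw1 hx1
      exact ⟨.proj j s1, IStepL.projC hstep, by rw [ITm.unwrap_proj, hsu]⟩
  | @tupC l ts t' t'' vs hvs hst ih =>
    cases t with
    | var j => rw [ITm.unwrap_var] at hx; simp at hx
    | app a b => rw [ITm.unwrap_app] at hx; simp at hx
    | proj j a => rw [ITm.unwrap_proj] at hx; simp at hx
    | clo a b c d => rw [ITm.unwrap_clo] at hx; simp at hx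
    | tup ws =>
      rw [ITm.unwrap_tup] at hx
      injection hx with hws
      cases hc with | tup hcts =>
      cases hwf with | tup hwts =>
      set k := ts.length with hk
      have hkw : k < ws.length := by
        have := congrArg List.length hws; simp at this; omega
      have hdecomp : ws = ws.take k ++ ws[k] :: ws.drop (k + 1) := by
        conv_lhs => rw [← List.take_append_drop k ws]
        rw [List.drop_eq_getElem_cons hkw]
      have htake : (ws.take k).map ITm.unwrap = ts := by
        rw [List.map_take, hws, List.take_left' hk.symm]
      have hdrop : (ws.drop (k + 1)).map ITm.unwrap = vs := by
        rw [List.map_drop, hws]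
        have : ts ++ t' :: vs = (ts ++ [t']) ++ vs := by simp
        rw [this, List.drop_left' (by simp [hk])]
      have hmid : (ws[k]).unwrap = t' := by
        have h1 : (ws.map ITm.unwrap).getD k default = t' := by
          rw [hws, List.getD_append_right _ _ _ _ (by omega)]
          have : k - ts.length = 0 := by omega
          rw [this]
          rfl
        rw [getD_map' ws _ _ hkw _ default, List.getD_eq_getElem _ _ hkw] at h1
        exact h1
      obtain ⟨s', hstep, hsu⟩ := ih ws[k] (hcts _ (List.getElem_mem hkw))
        (hwts _ (List.getElem_mem hkw)) hmid
      have hdropvals : ∀ d ∈ ws.drop (k + 1), IVal d := by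
        intro d hd
        refine IVal_of_SVal (hwts _ (List.mem_of_mem_drop hd)) (hvs _ ?_)
        rw [← hdrop]
        exact List.mem_map_of_mem hd
      refine ⟨.tup (ws.take k ++ s' :: ws.drop (k + 1)), ?_, ?_⟩
      · have hstep2 : IStepL l (.tup (ws.take k ++ ws[k] :: ws.drop (k + 1)))
            (.tup (ws.take k ++ s' :: ws.drop (k + 1))) := IStepL.tupC hdropvals hstep
        rw [← hdecomp] at hstep2
        exact hstep2
      · rw [ITm.unwrap_tup]
        simp only [List.map_append, List.map_cons, htake, hdrop, hsu]

end CC
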